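/- Let S be a nonabelian finite simple group and Q a nontrivial finite group, and let W = (Q → S) ⋊ Q be the regular wreath product S ≀ Q, i.e., the semidirect product of the group B₀ = (Q → S) of functions from Q to S (with pointwise multiplication) by Q, where q ∈ Q acts on f : Q → S by (q • f)(x) = f(q⁻¹x). Then the base subgroup B = {(f, 1) : f ∈ B₀} is the unique minimal normal subgroup of W; in particular, every nontrivial normal subgroup of W contains B. -/

import Mathlib

/-- The action of `Q` on the base group `Q → S` of the regular wreath product `S ≀ Q`,
permuting coordinates by left translation: `(q • f) x = f (q⁻¹ * x)`. -/
def wreathAction (S Q : Type*) [Group S] [Group Q] : Q →* MulAut (Q → S) where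
  toFun q :=
    { toFun := fun f x => f (q⁻¹ * x)
      invFun := fun f x => f (q * x)
      left_inv := fun f => by funext x; simp [← mul_assoc]
      right_inv := fun f => by funext x; simp [← mul_assoc]
      map_mul' := fun f g => rfl }
  map_one' := by ext f x; simp
  map_mul' := fun q r => by ext f x; simp [mul_assoc, mul_inv_rev]

/-! A nontrivial normal subgroup `N` of `S ≀ Q` meets the base `B`: an element of `N` outside `B`
moves coordinates, so its commutator with a function supported at `1` is a nontrivial element
of `N ∩ B`. Translating such an element by `Q` makes it nontrivial at any prescribed coordinate
`y`; since `S` has trivial center, commutators with functions supported at `y` then give a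
nontrivial normal subgroup of the `y`-th coordinate copy of `S` inside `N`. By simplicity `N`
contains every coordinate copy of `S`, and these generate `B` because `Q` is finite. -/

open SemidirectProduct
open scoped commutatorElement

theorem IsSimpleGroup.center_eq_bot {G : Type*} [Group G] [IsSimpleGroup G]
    (h : ∃ x y : G, x * y ≠ y * x) : Subgroup.center G = ⊥ := by
  refine (Subgroup.center G).normal_of_characteristic.eq_bot_or_eq_top.resolve_right fun htop => ?_
  obtain ⟨x, y, hxy⟩ := h
  exact hxy (Subgroup.mem_center_iff.mp (htop ▸ Subgroup.mem_top y) x)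

theorem Pi.commutatorElement_mulSingle {ι G : Type*} [DecidableEq ι] [Group G] (i : ι) (t : G)
    (f : ι → G) : ⁅(Pi.mulSingle i t : ι → G), f⁆ = Pi.mulSingle i ⁅t, f i⁆ := by
  funext j
  by_cases hj : j = i
  · subst hj; simp [commutatorElement_def]
  · simp [commutatorElement_def, hj]

theorem Subgroup.Normal.commutatorElement_mem_left {G : Type*} [Group G] {N : Subgroup G}
    (hN : N.Normal) {g : G} (hg : g ∈ N) (h : G) : ⁅g, h⁆ ∈ N :=
  Subgroup.commutator_le_left N ⊤ (Subgroup.commutator_mem_commutator hg (Subgroup.mem_top h))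

theorem Subgroup.Normal.mulSingle_mem {ι G : Type*} [DecidableEq ι] [Group G] [IsSimpleGroup G]
    {M : Subgroup (ι → G)} (hM : M.Normal) {f : ι → G} (hf : f ∈ M) {i : ι}
    (hfi : f i ∉ Subgroup.center G) (s : G) : Pi.mulSingle i s ∈ M := by
  set K := M.comap (MonoidHom.mulSingle _ i)
  have hK : K ≠ ⊥ := by
    obtain ⟨t, ht⟩ : ∃ t, t * f i ≠ f i * t := by simpa [Subgroup.mem_center_iff] using hfi
    have hmem : ⁅t, f i⁆ ∈ K := by
      change Pi.mulSingle i ⁅t, f i⁆ ∈ M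
      rw [← Pi.commutatorElement_mulSingle, ← commutatorElement_inv]
      exact M.inv_mem (hM.commutatorElement_mem_left hf _)
    exact fun hbot => ht (commutatorElement_eq_one_iff_mul_comm.mp (by simpa [hbot] using hmem))
  have : K = ⊤ := (hM.comap _).eq_bot_or_eq_top.resolve_left hK
  exact (Subgroup.eq_top_iff' K).mp this s

theorem SemidirectProduct.commutatorElement_inl {N G : Type*} [Group N] [Group G]
    {φ : G →* MulAut N} (w : N ⋊[φ] G) (a : N) :
    ⁅w, (inl a : N ⋊[φ] G)⁆ = inl (w.left * φ w.right a * w.left⁻¹ * a⁻¹) := by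
  ext <;> simp [commutatorElement_def, mul_assoc]

section Wreath

variable {S Q : Type*} [Group S] [Group Q]

@[simp]
theorem wreathAction_apply (q : Q) (f : Q → S) (x : Q) :
    wreathAction S Q q f x = f (q⁻¹ * x) := rfl

theorem wreath_exists_inl_mem_of_ne_bot [Nontrivial S]
    {N : Subgroup ((Q → S) ⋊[wreathAction S Q] Q)} (hN : N.Normal) (hN1 : N ≠ ⊥) :
    ∃ f : Q → S, f ≠ 1 ∧ inl f ∈ N := by
  classical
  obtain ⟨w, hwN, hw1⟩ := N.bot_or_exists_ne_one.resolve_left hN1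
  by_cases hq : w.right = 1
  · have hw : inl w.left = (w : (Q → S) ⋊[wreathAction S Q] Q) := by ext <;> simp [hq]
    exact ⟨w.left, fun h => hw1 (by rw [← hw, h, map_one]), hw ▸ hwN⟩
  · obtain ⟨s, hs⟩ := exists_ne (1 : S)
    refine ⟨_, fun h => hs ?_,
      commutatorElement_inl w (Pi.mulSingle 1 s) ▸ hN.commutatorElement_mem_left hwN _⟩
    simpa [Pi.mulSingle_apply, hq] using congrFun h 1

theorem wreath_range_inl_le_of_inl_mem [Finite Q] [IsSimpleGroup S]
    (hS : Subgroup.center S = ⊥) {N : Subgroup ((Q → S) ⋊[wreathAction S Q] Q)}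
    (hN : N.Normal) {f : Q → S} (hf : f ≠ 1) (hfN : inl f ∈ N) : inl.range ≤ N := by
  classical
  obtain ⟨x, hx⟩ := Function.ne_iff.mp hf
  have hmulSingle : ∀ y s, Pi.mulSingle y s ∈ N.comap inl := by
    intro y
    refine (hN.comap inl).mulSingle_mem (f := wreathAction S Q (y * x⁻¹) f) ?_ ?_
    · change inl _ ∈ N
      simpa only [inl_aut, map_inv] using hN.conj_mem _ hfN (inr (y * x⁻¹))
    · simpa only [hS, Subgroup.mem_bot, wreathAction_apply, mul_inv_rev, inv_inv,
        inv_mul_cancel_right, Pi.one_apply] using hx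
  rintro _ ⟨g, rfl⟩
  exact Subgroup.pi_mem_of_mulSingle_mem g fun y => hmulSingle y (g y)

end Wreath

theorem stmt_2_general (S Q : Type*) [Group S] [IsSimpleGroup S]
    (hna : ∃ x y : S, x * y ≠ y * x) [Group Q] [Finite Q] :
    (SemidirectProduct.inl.range :
        Subgroup ((Q → S) ⋊[wreathAction S Q] Q)).Normal ∧
    (SemidirectProduct.inl.range :
        Subgroup ((Q → S) ⋊[wreathAction S Q] Q)) ≠ ⊥ ∧
    ∀ N : Subgroup ((Q → S) ⋊[wreathAction S Q] Q), N.Normal → N ≠ ⊥ →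
      SemidirectProduct.inl.range ≤ N := by
  refine ⟨by rw [range_inl_eq_ker_rightHom]; infer_instance, ?_, fun N hN hN1 => ?_⟩
  · obtain ⟨f, hf⟩ := exists_ne (1 : Q → S)
    exact MonoidHom.range_eq_bot_iff.not.mpr fun h =>
      hf (inl_injective (by simpa using DFunLike.congr_fun h f))
  · obtain ⟨f, hf, hfN⟩ := wreath_exists_inl_mem_of_ne_bot hN hN1
    exact wreath_range_inl_le_of_inl_mem (IsSimpleGroup.center_eq_bot hna) hN hf hfN

/-- Let `S` be a nonabelian finite simple group and `Q` a nontrivial finite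
group, and let `W = (Q → S) ⋊ Q` be the regular wreath product `S ≀ Q`. Then the base
subgroup `B` (the canonical copy of `Q → S`) is the unique minimal normal subgroup of `W`:
it is normal, nontrivial, and contained in every nontrivial normal subgroup of `W`. -/
theorem stmt_2 (S Q : Type*) [Group S] [Finite S] [IsSimpleGroup S]
    (hna : ∃ x y : S, x * y ≠ y * x) [Group Q] [Finite Q] [Nontrivial Q] :
    (SemidirectProduct.inl.range :
        Subgroup ((Q → S) ⋊[wreathAction S Q] Q)).Normal ∧
    (SemidirectProduct.inl.range :
        Subgroup ((Q → S) ⋊[wreathAction S Q] Q)) ≠ ⊥ ∧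
    ∀ N : Subgroup ((Q → S) ⋊[wreathAction S Q] Q), N.Normal → N ≠ ⊥ →
      SemidirectProduct.inl.range ≤ N :=
  stmt_2_general S Q hna
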